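/- arXiv:1809.00575 — 2 statements merged into one kernel-verified Lean document; each statement's English description precedes it below -/
import Mathlib

section
/- Let g ∈ ℚ[[x,t]] satisfy g² = (1-t)² - 4xt², g ≡ 1 at the origin. Then g_A := (1+t-g)/(2t(tx+1)) is a well-defined power series with constant term 1, and its coefficient of x^i t^n for i ≥ 1 equals C(n,i)·C(n-i-1,i-1)/(n-i+1). Equivalently, g_A = 1 + Σ_{n≥1} (Σ_{i=1}^{⌊n/2⌋} C(n,i)C(n-i-1,i-1)/(n-i+1) · x^i) t^n. -/
open MvPowerSeries Finset

/-- Binomial coefficient with integer arguments (rational-valued), zero outside range. -/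
noncomputable def ichoose (a b : ℤ) : ℚ :=
  if 0 ≤ b ∧ b ≤ a then ((a.toNat).choose b.toNat : ℚ) else 0

lemma ichoose_of_nat (a b : ℕ) : ichoose a b = a.choose b := by
  unfold ichoose
  by_cases h : b ≤ a
  · simp [h, Int.le_of_ofNat_le_ofNat]
  · rw [if_neg, Nat.choose_eq_zero_of_lt (by omega), Nat.cast_zero]
    omega

lemma ichoose_of_lt (a b : ℤ) (h : a < b) : ichoose a b = 0 := by
  unfold ichoose; rw [if_neg]; omega

lemma ichoose_zero_right (a : ℤ) : ichoose a 0 = if 0 ≤ a then 1 else 0 := by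
  unfold ichoose
  by_cases h : 0 ≤ a
  · rw [if_pos ⟨le_refl 0, h⟩, if_pos h]; simp
  · rw [if_neg (by omega), if_neg h]

lemma ichoose_self (a : ℤ) (h : 0 ≤ a) : ichoose a a = 1 := by
  unfold ichoose; rw [if_pos ⟨h, le_refl a⟩, Nat.choose_self, Nat.cast_one]

lemma ichoose_pascal (a b : ℤ) (hb : 1 ≤ b) :
    ichoose a b = ichoose (a-1) b + ichoose (a-1) (b-1) := by
  unfold ichoose
  by_cases hab : b ≤ a
  · by_cases hlt : b ≤ a - 1
    · rw [if_pos ⟨by omega, hab⟩, if_pos ⟨by omega, hlt⟩, if_pos ⟨by omega, by omega⟩]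
      have hA : a.toNat = (a-1).toNat + 1 := by omega
      have hB : b.toNat = (b-1).toNat + 1 := by omega
      rw [hA, hB, Nat.choose_succ_succ, Nat.cast_add]
      ring
    · rw [if_pos ⟨by omega, hab⟩, if_neg (by omega), if_pos ⟨by omega, by omega⟩]
      rw [show a.toNat = b.toNat by omega, Nat.choose_self,
        show (a-1).toNat = (b-1).toNat by omega, Nat.choose_self]
      norm_num
  · rw [if_neg (by omega), if_neg (by omega), if_neg (by omega)]; norm_num

lemma sum_range_choose_eq (N k : ℕ) :
    ∑ m ∈ range (N+1), m.choose k = (N+1).choose (k+1) := by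
  have hr : range (N+1) = Icc 0 N := by rw [range_eq_Ico, Finset.Ico_add_one_right_eq_Icc]
  rw [hr, ← Nat.sum_Icc_choose N k]
  refine (Finset.sum_subset ?_ ?_).symm
  · intro x hx; simp only [mem_Icc] at *; omega
  · intro x hx hnx; simp only [mem_Icc] at hx hnx ⊢
    exact Nat.choose_eq_zero_of_lt (by omega)

lemma sum_choose_mul_choose (r : ℕ) : ∀ n s : ℕ,
    ∑ m ∈ range (n+1), m.choose r * (n-m).choose s = (n+1).choose (r+s+1) := by
  intro n
  induction n with
  | zero =>
    intro s
    rw [Finset.sum_range_one]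
    rcases r with _ | r
    · rcases s with _ | s
      · simp
      · simp [Nat.choose_eq_zero_of_lt]
    · rw [Nat.choose_eq_zero_of_lt (by omega), Nat.zero_mul,
        Nat.choose_eq_zero_of_lt (by omega)]
  | succ n ih =>
    intro s
    rw [Finset.sum_range_succ]
    rcases s with _ | s
    · simp only [Nat.choose_zero_right, Nat.mul_one, Nat.choose_self, Nat.add_zero]
      rw [← Finset.sum_range_succ (fun m => m.choose r) (n+1), sum_range_choose_eq (n+1) r]
    · have step : ∀ m ∈ range (n+1),
          m.choose r * (n + 1 - m).choose (s+1)
            = m.choose r * (n-m).choose (s+1) + m.choose r * (n-m).choose s := by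
        intro m hm
        rw [Finset.mem_range] at hm
        rw [show n + 1 - m = (n - m) + 1 by omega, Nat.choose_succ_succ' (n-m) s]
        ring
      rw [Finset.sum_congr rfl step, Finset.sum_add_distrib, ih (s+1), ih s,
        Nat.sub_self, Nat.choose_zero_succ, Nat.mul_zero, Nat.add_zero]
      have hp := Nat.choose_succ_succ' (n+1) (r+s+1)
      simp only [show r+(s+1)+1 = r+s+1+1 from by omega] at *
      omega

lemma ichoose_vandermonde (n : ℕ) (r s : ℕ) :
    ∑ m ∈ range (n+1), ichoose ((m:ℤ) - 2) r * ichoose ((n:ℤ) - m - 2) s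
      = ichoose ((n:ℤ) - 3) (r + s + 1) := by
  rcases Nat.lt_or_ge n 4 with h | h
  · rw [ichoose_of_lt _ _ (by push_cast; omega)]
    apply Finset.sum_eq_zero
    intro m hm
    rw [Finset.mem_range] at hm
    rcases Nat.lt_or_ge m 2 with h2 | h2
    · rw [ichoose_of_lt _ _ (by push_cast; omega), zero_mul]
    · rw [ichoose_of_lt ((n:ℤ) - m - 2) _ (by push_cast; omega), mul_zero]
  · obtain ⟨N, rfl⟩ : ∃ N, n = N + 4 := ⟨n - 4, by omega⟩
    rw [Finset.sum_range_succ, Finset.sum_range_succ, Finset.sum_range_succ',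
      Finset.sum_range_succ']
    have z1 : ichoose ((N:ℤ) + 4 - (N + 3) - 2) s = 0 := ichoose_of_lt _ _ (by omega)
    have z2 : ichoose ((N:ℤ) + 4 - (N + 4) - 2) s = 0 := ichoose_of_lt _ _ (by omega)
    have z3 : ichoose (-2 : ℤ) r = 0 := ichoose_of_lt _ _ (by omega)
    have z4 : ichoose (-1 : ℤ) r = 0 := ichoose_of_lt _ _ (by omega)
    push_cast
    rw [z3, z4]
    simp only [mul_zero, zero_mul, add_zero, zero_add]
    have key : ∀ m ∈ range (N+1),
        ichoose ((m:ℤ) + 1 + 1 - 2) r * ichoose ((N:ℤ) + 4 - ((m:ℤ) + 1 + 1) - 2) s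
          = ((m.choose r * (N - m).choose s : ℕ) : ℚ) := by
      intro m hm
      rw [Finset.mem_range] at hm
      rw [show (m:ℤ) + 1 + 1 - 2 = (m:ℤ) by ring,
        show (N:ℤ) + 4 - ((m:ℤ) + 1 + 1) - 2 = ((N - m : ℕ) : ℤ) by push_cast; omega]
      rw [ichoose_of_nat, ichoose_of_nat]
      push_cast
      ring
    rw [Finset.sum_congr rfl key, ← Nat.cast_sum, sum_choose_mul_choose r N s,
      show (N:ℤ) + 4 - 3 = ((N + 1 : ℕ) : ℤ) by push_cast; ring, z1, z2, mul_zero, mul_zero,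
      add_zero, add_zero,
      show ((r:ℤ) + s + 1) = ((r + s + 1 : ℕ) : ℤ) by push_cast; ring, ichoose_of_nat]

noncomputable abbrev e (i n : ℕ) : Fin 2 →₀ ℕ := Finsupp.single 0 i + Finsupp.single 1 n

lemma eq_e (d : Fin 2 →₀ ℕ) : d = e (d 0) (d 1) := by
  ext s; fin_cases s <;> simp [Finsupp.single_apply]

lemma e_eq_e {a b c d : ℕ} : e a b = e c d ↔ a = c ∧ b = d := by
  constructor
  · intro h
    constructor
    · have := congrArg (fun f => f 0) h; simpa [Finsupp.single_apply] using this
    · have := congrArg (fun f => f 1) h; simpa [Finsupp.single_apply] using this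
  · rintro ⟨rfl, rfl⟩; rfl

lemma e_zero : e 0 0 = 0 := by simp

lemma single_one_eq (k : ℕ) : Finsupp.single 1 k = e 0 k := by simp

lemma coeff_mul₂ (φ ψ : MvPowerSeries (Fin 2) ℚ) (i n : ℕ) :
    coeff (e i n) (φ * ψ) =
      ∑ j ∈ range (i+1), ∑ m ∈ range (n+1),
        coeff (e j m) φ * coeff (e (i-j) (n-m)) ψ := by
  rw [coeff_mul, ← Finset.sum_product']
  refine Finset.sum_nbij' (i := fun p => (p.1 0, p.1 1))
    (j := fun q => (e q.1 q.2, e (i - q.1) (n - q.2))) ?_ ?_ ?_ ?_ ?_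
  · intro p hp
    rw [Finset.HasAntidiagonal.mem_antidiagonal] at hp
    have h0 : p.1 0 + p.2 0 = i := by
      have := congrArg (fun f => f 0) hp; simpa [Finsupp.single_apply] using this
    have h1 : p.1 1 + p.2 1 = n := by
      have := congrArg (fun f => f 1) hp; simpa [Finsupp.single_apply] using this
    simp only [Finset.mem_product, Finset.mem_range]
    omega
  · intro q hq
    rw [Finset.HasAntidiagonal.mem_antidiagonal]
    simp only [Finset.mem_product, Finset.mem_range] at hq
    ext s; fin_cases s <;> simp [Finsupp.single_apply] <;> omega
  · intro p hp
    rw [Finset.HasAntidiagonal.mem_antidiagonal] at hp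
    have h0 : p.1 0 + p.2 0 = i := by
      have := congrArg (fun f => f 0) hp; simpa [Finsupp.single_apply] using this
    have h1 : p.1 1 + p.2 1 = n := by
      have := congrArg (fun f => f 1) hp; simpa [Finsupp.single_apply] using this
    have e1 : p.1 = e (p.1 0) (p.1 1) := eq_e _
    have e2 : p.2 = e (i - p.1 0) (n - p.1 1) := by
      rw [eq_e p.2]; congr 1 <;> omega
    exact Prod.ext e1.symm e2.symm
  · intro q hq
    simp only [Finset.mem_product, Finset.mem_range] at hq
    simp only
    congr 1 <;> [skip; skip] <;> first
      | (rw [Finsupp.add_apply]; simp [Finsupp.single_apply])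
  · intro p hp
    rw [Finset.HasAntidiagonal.mem_antidiagonal] at hp
    have h0 : p.1 0 + p.2 0 = i := by
      have := congrArg (fun f => f 0) hp; simpa [Finsupp.single_apply] using this
    have h1 : p.1 1 + p.2 1 = n := by
      have := congrArg (fun f => f 1) hp; simpa [Finsupp.single_apply] using this
    have e1 : p.1 = e (p.1 0) (p.1 1) := eq_e _
    have e2 : p.2 = e (i - p.1 0) (n - p.1 1) := by
      rw [eq_e p.2]; congr 1 <;> omega
    simp only
    rw [← e1, ← e2]

lemma e_le_e (a b i n : ℕ) : e a b ≤ e i n ↔ a ≤ i ∧ b ≤ n := by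
  rw [Finsupp.le_def]
  constructor
  · intro h
    exact ⟨by simpa [Finsupp.single_apply] using h 0,
           by simpa [Finsupp.single_apply] using h 1⟩
  · rintro ⟨h1, h2⟩ s
    fin_cases s <;> simp [Finsupp.single_apply] <;> omega

lemma e_sub (a b i n : ℕ) : e i n - e a b = e (i-a) (n-b) := by
  ext s; rw [Finsupp.tsub_apply]; fin_cases s <;> simp [Finsupp.single_apply]

lemma coeff_mono_mul (a b : ℕ) (c : ℚ) (φ : MvPowerSeries (Fin 2) ℚ) (i n : ℕ) :
    coeff (e i n) (monomial (e a b) c * φ) =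
      if a ≤ i ∧ b ≤ n then c * coeff (e (i-a) (n-b)) φ else 0 := by
  rw [coeff_monomial_mul, e_sub]
  by_cases h : a ≤ i ∧ b ≤ n
  · rw [if_pos ((e_le_e a b i n).2 h), if_pos h]
  · rw [if_neg (fun hc => h ((e_le_e a b i n).1 hc)), if_neg h]

noncomputable def cg : ℕ → ℕ → ℚ
  | 0, 0 => 1
  | 0, 1 => -1
  | 0, _+2 => 0
  | (i+1), n => -2 * catalan i * ichoose ((n:ℤ)-2) ((2*i : ℕ) : ℤ)

lemma cg_zero (n : ℕ) : cg 0 n = if n = 0 then 1 else if n = 1 then -1 else 0 := by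
  rcases n with _ | _ | n <;> simp [cg]

lemma cg_succ (i n : ℕ) : cg (i+1) n = -2 * catalan i * ichoose ((n:ℤ)-2) ((2*i : ℕ) : ℤ) := rfl

noncomputable def G : MvPowerSeries (Fin 2) ℚ := fun d => cg (d 0) (d 1)

lemma coeff_G (i n : ℕ) : coeff (e i n) G = cg i n := by
  rw [coeff_apply]
  show cg (e i n 0) (e i n 1) = cg i n
  congr 1 <;> simp [Finsupp.single_apply]

lemma coeff_rhs (i n : ℕ) :
    coeff (e i n) ((1 - X 1)^2 - 4 * X 0 * (X 1)^2 : MvPowerSeries (Fin 2) ℚ)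
      = (if i = 0 ∧ n = 0 then 1 else 0) + (if i = 0 ∧ n = 1 then -2 else 0)
        + (if i = 0 ∧ n = 2 then 1 else 0) + (if i = 1 ∧ n = 2 then -4 else 0) := by
  have expand : ((1 - X 1)^2 - 4 * X 0 * (X 1)^2 : MvPowerSeries (Fin 2) ℚ)
      = 1 - C 2 * X 1 + (X 1)^2 - C 4 * (X 0 * (X 1)^2) := by
    rw [show (C 2 : MvPowerSeries (Fin 2) ℚ) = 2 from map_ofNat _ 2,
      show (C 4 : MvPowerSeries (Fin 2) ℚ) = 4 from map_ofNat _ 4]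
    ring
  have hX2 : ((X 1)^2 : MvPowerSeries (Fin 2) ℚ) = monomial (e 0 2) 1 := by
    rw [X_pow_eq, single_one_eq]
  have hX012 : (X 0 * (X 1)^2 : MvPowerSeries (Fin 2) ℚ) = monomial (e 1 2) 1 := by
    rw [X_pow_eq, X, monomial_mul_monomial, one_mul]
  rw [expand, map_sub, map_add, map_sub, coeff_C_mul, coeff_C_mul, hX012, hX2,
    coeff_one, coeff_X, coeff_monomial, coeff_monomial, single_one_eq, ← e_zero]
  simp only [e_eq_e]
  split_ifs <;> norm_num <;> omega

lemma sumA (i' n : ℕ) :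
    ∑ m ∈ range (n+1), cg 0 m * cg (i'+1) (n-m)
      = -2 * catalan i' * (ichoose ((n:ℤ)-2) ((2*i' : ℕ)) - ichoose ((n:ℤ)-3) ((2*i' : ℕ))) := by
  rcases n with _ | n
  · rw [Finset.sum_range_one]
    show cg 0 0 * cg (i'+1) 0 = _
    have z1 : ichoose (((0:ℕ):ℤ)-2) ((2*i' : ℕ)) = 0 := ichoose_of_lt _ _ (by push_cast; omega)
    have z2 : ichoose (((0:ℕ):ℤ)-3) ((2*i' : ℕ)) = 0 := ichoose_of_lt _ _ (by push_cast; omega)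
    rw [cg_zero, cg_succ, z1, z2]
    norm_num
  · rw [Finset.sum_range_succ']
    have h0 : cg 0 0 * cg (i'+1) (n+1-0) = cg (i'+1) (n+1) := by
      rw [cg_zero]; norm_num
    rw [h0, Finset.sum_range_succ']
    have h1 : cg 0 (0+1) * cg (i'+1) (n+1-(0+1)) = -cg (i'+1) n := by
      rw [cg_zero]; norm_num
    have h2 : ∀ m ∈ range n, cg 0 (m+1+1) * cg (i'+1) (n+1-(m+1+1)) = 0 := by
      intro m hm
      rw [cg_zero]
      norm_num
    rw [h1, Finset.sum_eq_zero h2, cg_succ, cg_succ]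
    rw [show ((n+1 : ℕ) : ℤ) - 2 = (n:ℤ) - 1 by push_cast; ring,
      show ((n+1 : ℕ) : ℤ) - 3 = (n:ℤ) - 2 by push_cast; ring]
    ring

lemma sumB (i' n : ℕ) :
    ∑ m ∈ range (n+1), cg (i'+1) m * cg 0 (n-m)
      = -2 * catalan i' * (ichoose ((n:ℤ)-2) ((2*i' : ℕ)) - ichoose ((n:ℤ)-3) ((2*i' : ℕ))) := by
  rcases n with _ | n
  · rw [Finset.sum_range_one]
    show cg (i'+1) 0 * cg 0 0 = _
    have z1 : ichoose (((0:ℕ):ℤ)-2) ((2*i' : ℕ)) = 0 := ichoose_of_lt _ _ (by push_cast; omega)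
    have z2 : ichoose (((0:ℕ):ℤ)-3) ((2*i' : ℕ)) = 0 := ichoose_of_lt _ _ (by push_cast; omega)
    rw [cg_zero, cg_succ, z1, z2]
    norm_num
  · rw [Finset.sum_range_succ]
    have h0 : cg (i'+1) (n+1) * cg 0 (n+1-(n+1)) = cg (i'+1) (n+1) := by
      rw [Nat.sub_self, cg_zero]; norm_num
    rw [h0, Finset.sum_range_succ]
    have h1 : cg (i'+1) n * cg 0 (n+1-n) = -cg (i'+1) n := by
      rw [show n+1-n = 1 by omega, cg_zero]; norm_num
    have h2 : ∀ m ∈ range n, cg (i'+1) m * cg 0 (n+1-m) = 0 := by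
      intro m hm
      rw [Finset.mem_range] at hm
      rw [cg_zero, if_neg (by omega), if_neg (by omega), mul_zero]
    rw [h1, Finset.sum_eq_zero h2, cg_succ, cg_succ]
    rw [show ((n+1 : ℕ) : ℤ) - 2 = (n:ℤ) - 1 by push_cast; ring,
      show ((n+1 : ℕ) : ℤ) - 3 = (n:ℤ) - 2 by push_cast; ring]
    ring

lemma sumC (a b n : ℕ) :
    ∑ m ∈ range (n+1), cg (a+1) m * cg (b+1) (n-m)
      = 4 * catalan a * catalan b * ichoose ((n:ℤ)-3) (((2*a:ℕ):ℤ) + ((2*b:ℕ):ℤ) + 1) := by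
  have key : ∀ m ∈ range (n+1), cg (a+1) m * cg (b+1) (n-m)
      = (4 * catalan a * catalan b)
        * (ichoose ((m:ℤ)-2) ((2*a:ℕ)) * ichoose ((n:ℤ)-m-2) ((2*b:ℕ))) := by
    intro m hm
    rw [Finset.mem_range] at hm
    rw [cg_succ, cg_succ, show (((n-m:ℕ)):ℤ) - 2 = (n:ℤ)-m-2 by push_cast [Nat.cast_sub (by omega : m ≤ n)]; ring]
    ring
  rw [Finset.sum_congr rfl key, ← Finset.mul_sum, ichoose_vandermonde n (2*a) (2*b)]

lemma catalan_conv (i' : ℕ) (h : 1 ≤ i') :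
    ∑ j ∈ range i', (catalan j : ℚ) * catalan (i'-1-j) = catalan i' := by
  obtain ⟨k, rfl⟩ : ∃ k, i' = k + 1 := ⟨i' - 1, by omega⟩
  rw [show catalan (k+1) = ∑ ij ∈ Finset.HasAntidiagonal.antidiagonal k, catalan ij.1 * catalan ij.2
      from catalan_succ' k,
    Finset.Nat.sum_antidiagonal_eq_sum_range_succ_mk]
  push_cast
  exact Finset.sum_congr rfl fun j hj => rfl

lemma G_sq : (G * G : MvPowerSeries (Fin 2) ℚ) = (1 - X 1)^2 - 4 * X 0 * (X 1)^2 := by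
  apply MvPowerSeries.ext
  intro d
  rw [eq_e d, coeff_mul₂, coeff_rhs]
  simp only [coeff_G]
  generalize d 0 = i
  generalize d 1 = n
  rcases i with _ | i'
  · -- i = 0
    rw [Finset.sum_range_one]
    simp only [Nat.sub_zero, Nat.zero_sub]
    norm_num
    rcases n with _ | _ | _ | n
    · rw [Finset.sum_range_one]; simp only [cg_zero]; norm_num
    · rw [Finset.sum_range_succ, Finset.sum_range_one]; simp only [cg_zero]; norm_num
    · rw [Finset.sum_range_succ, Finset.sum_range_succ, Finset.sum_range_one]
      simp only [cg_zero]; norm_num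
    · rw [Finset.sum_eq_zero, if_neg (by omega : ¬ (n+1+1+1 = 0)),
        if_neg (by omega : ¬ (n+1+1+1 = 1))]
      · rw [if_neg (by omega : ¬ (n+1+1+1 = 2))]; norm_num
      intro m hm
      rw [Finset.mem_range] at hm
      rw [cg_zero, cg_zero]
      split_ifs <;> first | omega | norm_num
  · -- i = i' + 1
    rw [Finset.sum_range_succ, Finset.sum_range_succ']
    have hmid : ∀ j ∈ range i',
        (∑ m ∈ range (n+1), cg (j+1) m * cg (i'+1-(j+1)) (n-m))
          = 4 * ichoose ((n:ℤ)-3) ((2*i'-1 : ℕ)) * ((catalan j : ℚ) * catalan (i'-1-j)) := by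
      intro j hj
      rw [Finset.mem_range] at hj
      rw [show i'+1-(j+1) = (i'-1-j)+1 by omega, sumC j (i'-1-j) n,
        show (((2*j:ℕ)):ℤ) + ((2*(i'-1-j):ℕ):ℤ) + 1 = (((2*i'-1 : ℕ)):ℤ) by push_cast; omega]
      ring
    rw [Finset.sum_congr rfl hmid, ← Finset.mul_sum]
    rw [show i'+1-0 = i'+1 by omega]
    rw [sumA i' n, show i'+1-(i'+1) = 0 by omega, sumB i' n]
    rcases Nat.eq_zero_or_pos i' with rfl | hp
    · -- i = 1
      simp only [Finset.sum_range_zero, mul_zero, zero_add, Nat.mul_zero, Nat.cast_zero]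
      rw [ichoose_zero_right, ichoose_zero_right]
      have hc : (catalan 0 : ℚ) = 1 := by norm_num
      rw [hc]
      norm_num
      split_ifs <;> first | omega | norm_num
    · -- i ≥ 2
      rw [catalan_conv i' hp]
      have hpas : ichoose ((n:ℤ)-2) ((2*i' : ℕ))
          = ichoose ((n:ℤ)-3) ((2*i' : ℕ)) + ichoose ((n:ℤ)-3) ((2*i'-1 : ℕ)) := by
        rw [ichoose_pascal ((n:ℤ)-2) ((2*i' : ℕ)) (by push_cast; omega)]
        rw [show (n:ℤ)-2-1 = (n:ℤ)-3 by ring,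
          show (((2*i' : ℕ)):ℤ) - 1 = (((2*i'-1 : ℕ)):ℤ) by push_cast; omega]
      rw [hpas]
      have c1 : ¬ (i'+1 = 0 ∧ n = 0) := by omega
      have c2 : ¬ (i'+1 = 0 ∧ n = 1) := by omega
      have c3 : ¬ (i'+1 = 0 ∧ n = 2) := by omega
      have c4 : ¬ (i'+1 = 1 ∧ n = 2) := by omega
      rw [if_neg c1, if_neg c2, if_neg c3, if_neg c4]
      ring

lemma double_sum_ite (I N : ℕ) (c : ℚ) :
    ∑ j ∈ range (I+1), ∑ m ∈ range (N+1), (if j = I ∧ m = N then c else 0) = c := by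
  rw [Finset.sum_eq_single I]
  · rw [Finset.sum_eq_single N]
    · simp
    · intro b _ hbn; rw [if_neg (by tauto)]
    · intro h; exact absurd (Finset.self_mem_range_succ N) h
  · intro b _ hbn; exact Finset.sum_eq_zero fun m _ => by rw [if_neg (by tauto)]
  · intro h; exact absurd (Finset.self_mem_range_succ I) h

lemma g_eq_G (g : MvPowerSeries (Fin 2) ℚ)
    (hg : g^2 = (1 - X 1)^2 - 4 * X 0 * (X 1)^2)
    (hg0 : constantCoeff g = 1) : g = G := by
  have hzero : ∀ d, coeff d ((g - G) * (g + G)) = 0 := by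
    intro d
    have hr : (g - G) * (g + G) = g^2 - G*G := by ring
    rw [hr, hg, G_sq, sub_self, map_zero]
  have hG00 : coeff (e 0 0) G = 1 := by rw [coeff_G]; rfl
  have hg00 : coeff (e 0 0) g = 1 := by
    rw [e_zero, coeff_zero_eq_constantCoeff_apply, hg0]
  have main : ∀ N, ∀ i n : ℕ, i + n ≤ N → coeff (e i n) g = coeff (e i n) G := by
    intro N
    induction N with
    | zero =>
      intro i n h
      obtain ⟨rfl, rfl⟩ : i = 0 ∧ n = 0 := by omega
      rw [hg00, hG00]
    | succ N ih =>
      intro i n h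
      rcases Nat.lt_or_ge (i+n) (N+1) with h' | h'
      · exact ih i n (by omega)
      · have hz := hzero (e i n)
        rw [coeff_mul₂] at hz
        have hterm : ∀ j ∈ range (i+1), ∀ m ∈ range (n+1),
            coeff (e j m) (g - G) * coeff (e (i-j) (n-m)) (g + G)
              = if j = i ∧ m = n then
                  coeff (e j m) (g - G) * coeff (e (i-j) (n-m)) (g + G) else 0 := by
          intro j hj m hm
          rw [Finset.mem_range] at hj hm
          by_cases hc : j = i ∧ m = n
          · rw [if_pos hc]
          · rw [if_neg hc, map_sub, ih j m (by omega), sub_self, zero_mul]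
        rw [Finset.sum_congr rfl (fun j hj =>
          Finset.sum_congr rfl (fun m hm => hterm j hj m hm))] at hz
        have hcong : ∀ j ∈ range (i+1), ∀ m ∈ range (n+1),
            (if j = i ∧ m = n then
              coeff (e j m) (g - G) * coeff (e (i-j) (n-m)) (g + G) else 0)
            = if j = i ∧ m = n then
                (coeff (e i n) g - coeff (e i n) G) * 2 else 0 := by
          intro j _ m _
          by_cases hc : j = i ∧ m = n
          · obtain ⟨rfl, rfl⟩ := hc
            rw [if_pos ⟨rfl, rfl⟩, if_pos ⟨rfl, rfl⟩, Nat.sub_self, Nat.sub_self,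
              map_sub, map_add, hg00, hG00]
            ring
          · rw [if_neg hc, if_neg hc]
        rw [Finset.sum_congr rfl (fun j hj =>
          Finset.sum_congr rfl (fun m hm => hcong j hj m hm)), double_sum_ite] at hz
        linarith
  apply MvPowerSeries.ext
  intro d
  rw [eq_e d]
  exact main (d 0 + d 1) _ _ le_rfl

section
open Nat

lemma choose_id (j k : ℕ) :
    ((j:ℚ)+2) * ((2*j+k+4).choose (j+2)) * ((j+k+1).choose (j+1))
      + ((j:ℚ)+2) * ((2*j+k+3).choose (j+1)) * ((j+k+1).choose j)
    = ((j:ℚ)+k+3) * ((2*j+2).choose (j+1)) * ((2*j+k+3).choose (2*j+2)) := by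
  have c1 : ((2*j+k+4).choose (j+2) : ℚ) = (2*j+k+4)! / ((j+2)! * (j+k+2)!) := by
    rw [Nat.cast_choose ℚ (by omega), show 2*j+k+4 - (j+2) = j+k+2 by omega]
  have c2 : ((j+k+1).choose (j+1) : ℚ) = (j+k+1)! / ((j+1)! * k !) := by
    rw [Nat.cast_choose ℚ (by omega), show j+k+1 - (j+1) = k by omega]
  have c3 : ((2*j+k+3).choose (j+1) : ℚ) = (2*j+k+3)! / ((j+1)! * (j+k+2)!) := by
    rw [Nat.cast_choose ℚ (by omega), show 2*j+k+3 - (j+1) = j+k+2 by omega]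
  have c4 : ((j+k+1).choose j : ℚ) = (j+k+1)! / (j ! * (k+1)!) := by
    rw [Nat.cast_choose ℚ (by omega), show j+k+1 - j = k+1 by omega]
  have c5 : ((2*j+2).choose (j+1) : ℚ) = (2*j+2)! / ((j+1)! * (j+1)!) := by
    rw [Nat.cast_choose ℚ (by omega), show 2*j+2 - (j+1) = j+1 by omega]
  have c6 : ((2*j+k+3).choose (2*j+2) : ℚ) = (2*j+k+3)! / ((2*j+2)! * (k+1)!) := by
    rw [Nat.cast_choose ℚ (by omega), show 2*j+k+3 - (2*j+2) = k+1 by omega]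
  have f1 : ((2*j+k+4)! : ℚ) = ((2*j+k+4 : ℕ) : ℚ) * (2*j+k+3)! := by
    rw [show 2*j+k+4 = (2*j+k+3)+1 by ring, Nat.factorial_succ]; push_cast; ring
  have f2 : ((j+2)! : ℚ) = ((j:ℚ)+2) * (j+1)! := by
    rw [show j+2 = (j+1)+1 by ring, Nat.factorial_succ]; push_cast; ring
  have f3 : ((j+k+2)! : ℚ) = ((j:ℚ)+k+2) * (j+k+1)! := by
    rw [show j+k+2 = (j+k+1)+1 by ring, Nat.factorial_succ]; push_cast; ring
  have f4 : ((j+1)! : ℚ) = ((j:ℚ)+1) * j ! := by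
    rw [Nat.factorial_succ]; push_cast; ring
  have f5 : ((k+1)! : ℚ) = ((k:ℚ)+1) * k ! := by
    rw [Nat.factorial_succ]; push_cast; ring
  rw [c1, c2, c3, c4, c5, c6, f1, f2, f3, f5, f4]
  have nz1 : ((2*j+k+3)! : ℚ) ≠ 0 := Nat.cast_ne_zero.mpr (Nat.factorial_ne_zero _)
  have nz2 : ((j+k+1)! : ℚ) ≠ 0 := Nat.cast_ne_zero.mpr (Nat.factorial_ne_zero _)
  have nz3 : ((j ! : ℕ) : ℚ) ≠ 0 := Nat.cast_ne_zero.mpr (Nat.factorial_ne_zero _)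
  have nz4 : ((k ! : ℕ) : ℚ) ≠ 0 := Nat.cast_ne_zero.mpr (Nat.factorial_ne_zero _)
  have nz5 : (((2*j+2)! : ℕ) : ℚ) ≠ 0 := Nat.cast_ne_zero.mpr (Nat.factorial_ne_zero _)
  have nz6 : ((j:ℚ)+2) ≠ 0 := by positivity
  have nz7 : ((j:ℚ)+1) ≠ 0 := by positivity
  have nz8 : ((j:ℚ)+k+2) ≠ 0 := by positivity
  have nz9 : ((k:ℚ)+1) ≠ 0 := by positivity
  push_cast
  field_simp
  ring

end

noncomputable def cA : ℕ → ℕ → ℚ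
  | 0, 0 => 1
  | 0, _+1 => 0
  | (i+1), n => ichoose (n:ℤ) ((i+1 : ℕ) : ℤ)
      * ichoose ((n:ℤ) - ((i+1:ℕ):ℤ) - 1) (((i+1:ℕ):ℤ) - 1) / ((n:ℚ) - ((i+1:ℕ):ℚ) + 1)

lemma cA_succ (i n : ℕ) : cA (i+1) n = ichoose (n:ℤ) ((i+1 : ℕ) : ℤ)
    * ichoose ((n:ℤ) - ((i+1:ℕ):ℤ) - 1) (((i+1:ℕ):ℤ) - 1) / ((n:ℚ) - ((i+1:ℕ):ℚ) + 1) := rfl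

lemma cA_zero (n : ℕ) : cA 0 n = if n = 0 then 1 else 0 := by
  rcases n with _ | n <;> simp [cA]

lemma catalan_cast (j : ℕ) : (catalan (j+1) : ℚ) = ((2*j+2).choose (j+1) : ℚ) / ((j:ℚ)+2) := by
  have h := succ_mul_catalan_eq_centralBinom (j+1)
  rw [Nat.centralBinom] at h
  have h2 : (j+2) * catalan (j+1) = (2*j+2).choose (j+1) := by
    rw [show 2*j+2 = 2*(j+1) by ring]; exact h
  have h3 := congrArg (fun x : ℕ => (x : ℚ)) h2
  push_cast at h3
  rw [eq_div_iff (by positivity : ((j:ℚ)+2) ≠ 0)]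
  linarith

lemma star (i n : ℕ) (hn : 1 ≤ n) :
    cA (i+1) n + cA i (n-1) = (catalan i : ℚ) * ichoose ((n:ℤ)-1) ((2*i : ℕ)) := by
  rcases i with _ | j
  · -- i = 0
    rcases n with _ | _ | n
    · omega
    · -- n = 1
      rw [cA_succ, cA_zero]
      push_cast
      norm_num
      rw [ichoose_of_lt (-1 : ℤ) 0 (by omega), mul_zero, zero_add, ichoose_zero_right]
      norm_num
    · -- n ≥ 2
      rw [cA_succ, cA_zero, if_neg (by omega)]
      have e1 : ichoose ((n+2:ℕ):ℤ) ((0+1:ℕ):ℤ) = (n:ℚ)+2 := by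
        rw [show ((0+1:ℕ):ℤ) = ((1:ℕ):ℤ) by norm_num, ichoose_of_nat (n+2) 1,
          Nat.choose_one_right]
        push_cast; ring
      have e2 : ichoose (((n+2:ℕ):ℤ) - ((0+1:ℕ):ℤ) - 1) (((0+1:ℕ):ℤ) - 1) = 1 := by
        rw [show (((n+2:ℕ):ℤ) - ((0+1:ℕ):ℤ) - 1) = (n:ℤ) by push_cast; ring,
          show (((0+1:ℕ):ℤ) - 1) = 0 by norm_num, ichoose_zero_right, if_pos (by omega)]
      rw [e1, e2, show ((n+2:ℕ):ℤ) - 1 = ((n+1:ℕ):ℤ) by push_cast; ring,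
        show ((2*0:ℕ):ℤ) = ((0:ℕ):ℤ) by norm_num, ichoose_of_nat (n+1) 0,
        Nat.choose_zero_right]
      have hnz : (n:ℚ) + 2 - ((0+1:ℕ):ℚ) + 1 ≠ 0 := by
        push_cast
        intro hcon
        have hge : (0:ℚ) ≤ (n:ℚ) := Nat.cast_nonneg n
        linarith
      push_cast at hnz ⊢
      rw [catalan_zero]
      field_simp
      have h2 : ((n:ℚ) + 2) ≠ 0 := by positivity
      rw [show (n:ℚ)+1+1-1+1 = n+2 by ring, div_self h2]
      norm_num
  · -- i = j+1
    rcases Nat.lt_or_ge n (2*j+3) with hc | hc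
    · -- n ≤ 2j+2 : everything vanishes
      rw [cA_succ, cA_succ, catalan_cast]
      rw [ichoose_of_lt ((n:ℤ) - ((j+1+1:ℕ):ℤ) - 1) _ (by push_cast; omega),
        ichoose_of_lt ((((n-1:ℕ)):ℤ) - ((j+1:ℕ):ℤ) - 1) _ (by push_cast; omega),
        ichoose_of_lt ((n:ℤ)-1) _ (by push_cast; omega)]
      ring
    rcases Nat.lt_or_ge n (2*j+4) with hc2 | hc2
    · -- n = 2j+3
      obtain rfl : n = 2*j+3 := by omega
      rw [cA_succ, cA_succ, catalan_cast]
      rw [ichoose_of_lt ((((2*j+3:ℕ)):ℤ) - ((j+1+1:ℕ):ℤ) - 1) _ (by push_cast; omega)]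
      have e1 : ichoose (((2*j+3-1:ℕ)):ℤ) ((j+1:ℕ):ℤ) = ((2*j+2).choose (j+1) : ℚ) := by
        rw [show (2*j+3-1:ℕ) = 2*j+2 by omega, ichoose_of_nat]
      have e2 : ichoose ((((2*j+3-1:ℕ)):ℤ) - ((j+1:ℕ):ℤ) - 1) (((j+1:ℕ):ℤ) - 1) = 1 := by
        rw [show (((2*j+3-1:ℕ)):ℤ) - ((j+1:ℕ):ℤ) - 1 = ((j:ℕ):ℤ) by push_cast; omega,
          show ((j+1:ℕ):ℤ) - 1 = ((j:ℕ):ℤ) by push_cast; ring, ichoose_of_nat,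
          Nat.choose_self]
        norm_num
      have e3 : ichoose ((((2*j+3:ℕ)):ℤ) - 1) ((2*(j+1) : ℕ)) = 1 := by
        rw [show ((2*j+3:ℕ):ℤ) - 1 = ((2*(j+1):ℕ):ℤ) by push_cast; ring, ichoose_of_nat,
          Nat.choose_self]
        norm_num
      rw [e1, e2, e3]
      have hd : ((2*j+3-1:ℕ):ℚ) - ((j+1:ℕ):ℚ) + 1 = (j:ℚ)+2 := by
        rw [show (2*j+3-1:ℕ) = 2*j+2 by omega]; push_cast; ring
      rw [hd]
      ring
    · -- n ≥ 2j+4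
      obtain ⟨k, rfl⟩ : ∃ k, n = 2*j+k+4 := ⟨n - (2*j+4), by omega⟩
      rw [cA_succ, cA_succ, catalan_cast]
      have e1 : ichoose (((2*j+k+4:ℕ)):ℤ) ((j+1+1:ℕ):ℤ) = ((2*j+k+4).choose (j+2) : ℚ) := by
        rw [show ((j+1+1:ℕ):ℤ) = ((j+2:ℕ):ℤ) by push_cast; ring, ichoose_of_nat]
      have e2 : ichoose ((((2*j+k+4:ℕ)):ℤ) - ((j+1+1:ℕ):ℤ) - 1) (((j+1+1:ℕ):ℤ) - 1)
          = ((j+k+1).choose (j+1) : ℚ) := by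
        rw [show (((2*j+k+4:ℕ)):ℤ) - ((j+1+1:ℕ):ℤ) - 1 = ((j+k+1:ℕ):ℤ) by push_cast; ring,
          show ((j+1+1:ℕ):ℤ) - 1 = ((j+1:ℕ):ℤ) by push_cast; ring, ichoose_of_nat]
      have e3 : ichoose (((2*j+k+4-1:ℕ)):ℤ) ((j+1:ℕ):ℤ) = ((2*j+k+3).choose (j+1) : ℚ) := by
        rw [show (2*j+k+4-1:ℕ) = 2*j+k+3 by omega, ichoose_of_nat]
      have e4 : ichoose ((((2*j+k+4-1:ℕ)):ℤ) - ((j+1:ℕ):ℤ) - 1) (((j+1:ℕ):ℤ) - 1)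
          = ((j+k+1).choose j : ℚ) := by
        rw [show (((2*j+k+4-1:ℕ)):ℤ) - ((j+1:ℕ):ℤ) - 1 = ((j+k+1:ℕ):ℤ) by push_cast; omega,
          show ((j+1:ℕ):ℤ) - 1 = ((j:ℕ):ℤ) by push_cast; ring, ichoose_of_nat]
      have e5 : ichoose ((((2*j+k+4:ℕ)):ℤ) - 1) ((2*(j+1) : ℕ))
          = ((2*j+k+3).choose (2*j+2) : ℚ) := by
        rw [show (((2*j+k+4:ℕ)):ℤ) - 1 = ((2*j+k+3:ℕ):ℤ) by push_cast; ring,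
          show ((2*(j+1):ℕ):ℤ) = ((2*j+2:ℕ):ℤ) by push_cast; ring, ichoose_of_nat]
      rw [e1, e2, e3, e4, e5]
      have hd1 : ((2*j+k+4:ℕ):ℚ) - ((j+1+1:ℕ):ℚ) + 1 = (j:ℚ)+k+3 := by push_cast; ring
      have hd2 : ((2*j+k+4-1:ℕ):ℚ) - ((j+1:ℕ):ℚ) + 1 = (j:ℚ)+k+3 := by
        rw [show (2*j+k+4-1:ℕ) = 2*j+k+3 by omega]; push_cast; ring
      rw [hd1, hd2]
      have hnz1 : (j:ℚ)+k+3 ≠ 0 := by positivity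
      have hnz2 : (j:ℚ)+2 ≠ 0 := by positivity
      have hid := choose_id j k
      field_simp
      linarith [choose_id j k]

/-- Let `g ∈ ℚ[[x,t]]` satisfy `g² = (1-t)² - 4xt²` with constant term `1`, and let
`g_A` be the power series with `2t(tx+1)·g_A = 1+t-g`. Then `g_A` has constant term `1`
and its coefficient of `xⁱtⁿ` for `i ≥ 1` equals `C(n,i)·C(n-i-1,i-1)/(n-i+1)`. -/
theorem coefficients_of_gA (g gA : MvPowerSeries (Fin 2) ℚ)
    (x t : MvPowerSeries (Fin 2) ℚ) (hx : x = MvPowerSeries.X 0) (ht : t = MvPowerSeries.X 1)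
    (hg : g ^ 2 = (1 - t) ^ 2 - 4 * x * t ^ 2)
    (hg0 : MvPowerSeries.constantCoeff g = 1)
    (hA : 2 * t * (t * x + 1) * gA = 1 + t - g) :
    MvPowerSeries.constantCoeff gA = 1 ∧
    (∀ i n : ℕ, 1 ≤ i →
      MvPowerSeries.coeff (Finsupp.single 0 i + Finsupp.single 1 n) gA =
        ichoose n i * ichoose ((n : ℤ) - i - 1) (i - 1) / ((n : ℚ) - i + 1)) := by
  subst hx; subst ht
  have hgG := g_eq_G g (by rw [hg]) hg0
  rw [hgG] at hA
  -- rewrite LHS of hA with monomials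
  have mono2 : ∀ (d : Fin 2 →₀ ℕ),
      (monomial d (2:ℚ) : MvPowerSeries (Fin 2) ℚ) = 2 * monomial d 1 := by
    intro d
    rw [show (2 : MvPowerSeries (Fin 2) ℚ) = C 2 from (map_ofNat _ 2).symm]
    apply MvPowerSeries.ext; intro d'
    rw [coeff_C_mul, coeff_monomial, coeff_monomial]
    split_ifs <;> norm_num
  have hX110 : (X 1 * (X 1 * X 0) : MvPowerSeries (Fin 2) ℚ) = monomial (e 1 2) 1 := by
    rw [X_def, X_def, monomial_mul_monomial, monomial_mul_monomial, one_mul, one_mul,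
      show (Finsupp.single 1 1 + (Finsupp.single 1 1 + Finsupp.single 0 1) : Fin 2 →₀ ℕ)
          = e 1 2 from by ext s; fin_cases s <;> simp [Finsupp.single_apply]]
  have hL : (2 * X 1 * (X 1 * X 0 + 1) : MvPowerSeries (Fin 2) ℚ) * gA
      = monomial (e 0 1) 2 * gA + monomial (e 1 2) 2 * gA := by
    rw [mono2, mono2, ← hX110, show (monomial (e 0 1) 1 : MvPowerSeries (Fin 2) ℚ) = X 1 by
      rw [X_def, single_one_eq]]
    ring
  rw [hL] at hA
  have hRHS : ∀ i m : ℕ, coeff (e i m) (1 + X 1 - G) =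
      (if i = 0 ∧ m = 0 then 1 else 0) + (if i = 0 ∧ m = 1 then 1 else 0) - cg i m := by
    intro i m
    rw [map_sub, map_add, coeff_one, coeff_X, coeff_G, single_one_eq, ← e_zero]
    simp only [e_eq_e]
  have hcoeffA : ∀ i n : ℕ, 2 * coeff (e i n) gA
      + (if 1 ≤ i ∧ 1 ≤ n then 2 * coeff (e (i-1) (n-1)) gA else 0)
      = coeff (e i (n+1)) (1 + X 1 - G) := by
    intro i n
    have h := congrArg (coeff (e i (n+1))) hA
    rw [map_add, coeff_mono_mul, coeff_mono_mul] at h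
    rw [if_pos ⟨Nat.zero_le i, by omega⟩] at h
    rw [show i - 0 = i by omega, show n+1-1 = n by omega] at h
    rw [show n+1-2 = n-1 by omega] at h
    have hiff : (1 ≤ i ∧ 2 ≤ n+1) ↔ (1 ≤ i ∧ 1 ≤ n) := by omega
    rw [if_congr hiff rfl rfl] at h
    exact h
  have coeff_gA : ∀ i n : ℕ, coeff (e i n) gA = cA i n := by
    intro i
    induction i with
    | zero =>
      intro n
      have h := hcoeffA 0 n
      rw [if_neg (by omega), add_zero, hRHS, cg_zero] at h
      rw [cA_zero]
      rcases n with _ | n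
      · norm_num at h ⊢; linarith
      · rw [if_neg (by omega : ¬(0 = 0 ∧ n+1+1 = 0)), if_neg (by omega : ¬(0 = 0 ∧ n+1+1 = 1)),
          if_neg (by omega : ¬(n+1+1 = 0)), if_neg (by omega : ¬(n+1+1 = 1))] at h
        rw [if_neg (by omega : ¬(n+1 = 0))]
        linarith
    | succ i ih =>
      intro n
      have h := hcoeffA (i+1) n
      rw [hRHS] at h
      rcases n with _ | n
      · rw [if_neg (by omega : ¬(1 ≤ i+1 ∧ 1 ≤ 0)), add_zero,
          if_neg (by omega : ¬(i+1 = 0 ∧ 0+1 = 0)), if_neg (by omega : ¬(i+1 = 0 ∧ 0+1 = 1)),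
          cg_succ] at h
        rw [ichoose_of_lt ((((0+1:ℕ)):ℤ) - 2) _ (by push_cast; omega)] at h
        rw [cA_succ, ichoose_of_lt ((0:ℕ):ℤ) ((i+1:ℕ):ℤ) (by push_cast; omega),
          zero_mul, zero_div]
        norm_num at h
        linarith
      · rw [if_pos (⟨by omega, by omega⟩ : 1 ≤ i+1 ∧ 1 ≤ n+1), show i+1-1 = i by omega,
          show n+1-1 = n by omega, ih n,
          if_neg (by omega : ¬(i+1 = 0 ∧ n+1+1 = 0)), if_neg (by omega : ¬(i+1 = 0 ∧ n+1+1 = 1)),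
          cg_succ] at h
        have hs := star i (n+1) (by omega)
        rw [show (n+1:ℕ) - 1 = n by omega] at hs
        rw [show (((n+1+1:ℕ)):ℤ) - 2 = (n:ℤ) by push_cast; ring] at h
        rw [show (((n+1:ℕ)):ℤ) - 1 = (n:ℤ) by push_cast; ring] at hs
        linarith
  constructor
  · have h := coeff_gA 0 0
    rw [cA_zero, if_pos rfl] at h
    rw [← coeff_zero_eq_constantCoeff_apply, ← e_zero]
    exact h
  · intro i n hi
    obtain ⟨i', rfl⟩ : ∃ i', i = i'+1 := ⟨i - 1, by omega⟩
    rw [show (Finsupp.single 0 (i'+1) + Finsupp.single 1 n : Fin 2 →₀ ℕ) = e (i'+1) n from rfl,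
      coeff_gA (i'+1) n, cA_succ]
end

section
/- Define g_D = Σ_{m≥0} Σ_{k≥1} [(2k+m-2)/k]·C(2k-2,k-1)·C(2k+m-2,2k-2)·x^k t^{2k+m}. Let g ∈ ℚ[[x,t]] satisfy g² = (1-t)²-4xt², with constant term 1. Then g_D = (g-1)(g-1+t)/(2g). -/
open MvPowerSeries


open Finset Nat

set_option linter.constructorNameAsVariable false

lemma L1n (s : ℕ) : ∑ j ∈ range (s+1), catalan j * catalan (s-j) = catalan (s+1) := by
  rw [catalan_succ', ← Nat.sum_antidiagonal_eq_sum_range_succ (fun x y => catalan x * catalan y) s]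

lemma L1 (s : ℕ) : ∑ j ∈ range (s+1), (catalan j : ℚ) * catalan (s-j) = catalan (s+1) := by
  rw [← L1n s]; push_cast; rfl

lemma L2 (n : ℕ) : (centralBinom n : ℚ) = (n+1) * catalan n := by
  exact_mod_cast (succ_mul_catalan_eq_centralBinom n).symm

lemma L3 (s : ℕ) : ∑ j ∈ range (s+1), (centralBinom j : ℚ) * catalan (s-j) = centralBinom (s+1) / 2 := by
  have refl : ∑ j ∈ range (s+1), (centralBinom j : ℚ) * catalan (s-j)
      = ∑ j ∈ range (s+1), (centralBinom (s-j) : ℚ) * catalan j := by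
    rw [← Finset.sum_range_reflect]
    apply Finset.sum_congr rfl
    intro j hj
    simp only [mem_range] at hj
    have e1 : s + 1 - 1 - j = s - j := by omega
    have e2 : s - (s - j) = j := by omega
    rw [e1, e2]
  have h2 : (2:ℚ) * ∑ j ∈ range (s+1), (centralBinom j : ℚ) * catalan (s-j) = centralBinom (s+1) := by
    rw [two_mul]
    nth_rewrite 2 [refl]
    rw [← Finset.sum_add_distrib]
    have : ∑ j ∈ range (s+1), ((centralBinom j : ℚ) * catalan (s-j) + (centralBinom (s-j) : ℚ) * catalan j)
        = ∑ j ∈ range (s+1), ((s:ℚ)+2) * ((catalan j : ℚ) * catalan (s-j)) := by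
      apply Finset.sum_congr rfl
      intro j hj
      simp only [mem_range] at hj
      rw [L2, L2]
      have hle : j ≤ s := by omega
      have : ((s - j : ℕ) : ℚ) = (s:ℚ) - j := by push_cast [hle]; ring
      rw [this]
      ring
    rw [this, ← Finset.mul_sum, L1, L2]
    push_cast
    ring
  linarith

lemma L4 (n : ℕ) : (centralBinom (n+1) : ℚ) = 4 * centralBinom n - 2 * catalan n := by
  have h := Nat.succ_mul_centralBinom_succ n
  have h' : ((n:ℚ)+1) * centralBinom (n+1) = 2 * (2*n+1) * centralBinom n := by
    exact_mod_cast congrArg (Nat.cast : ℕ → ℚ) h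
  have hn : ((n:ℚ)+1) ≠ 0 := by positivity
  have hc := L2 n
  field_simp at h' ⊢
  nlinarith [h', hc]

lemma L5 (s : ℕ) : ∑ j ∈ range (s+1), (centralBinom j : ℚ) * centralBinom (s-j) = 4^s := by
  induction s with
  | zero => simp [centralBinom]
  | succ s ih =>
    rw [Finset.sum_range_succ' (fun j => (centralBinom j : ℚ) * centralBinom (s+1-j)) (s+1)]
    have e1 : ∑ j ∈ range (s+1), (centralBinom (j+1) : ℚ) * centralBinom (s+1-(j+1))
        = ∑ j ∈ range (s+1), ((4:ℚ) * centralBinom j - 2 * catalan j) * centralBinom (s-j) := by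
      apply Finset.sum_congr rfl
      intro j hj
      have e : s + 1 - (j+1) = s - j := by omega
      rw [e, ← L4]
    rw [e1]
    have e2 : ∑ j ∈ range (s+1), ((4:ℚ) * centralBinom j - 2 * catalan j) * centralBinom (s-j)
        = 4 * (∑ j ∈ range (s+1), (centralBinom j : ℚ) * centralBinom (s-j))
          - 2 * ∑ j ∈ range (s+1), (catalan j : ℚ) * centralBinom (s-j) := by
      rw [Finset.mul_sum, Finset.mul_sum, ← Finset.sum_sub_distrib]
      apply Finset.sum_congr rfl
      intros; ring
    have refl : ∑ j ∈ range (s+1), (catalan j : ℚ) * centralBinom (s-j)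
        = ∑ j ∈ range (s+1), (centralBinom j : ℚ) * catalan (s-j) := by
      rw [← Finset.sum_range_reflect]
      apply Finset.sum_congr rfl
      intro j hj
      simp only [mem_range] at hj
      have h1 : s + 1 - 1 - j = s - j := by omega
      have h2 : s - (s - j) = j := by omega
      rw [h1, h2, mul_comm]
    rw [e2, refl, ih, L3]
    simp only [Nat.sub_self, Nat.sub_zero, centralBinom_zero, Nat.cast_one, mul_one]
    ring

lemma L6 (s : ℕ) : ∑ j ∈ range (s+1), (j : ℚ) * (s-j : ℕ) * catalan j * catalan (s-j)
    = 4^s - (s+1) * catalan (s+1) := by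
  have key : ∀ j ∈ range (s+1), (j : ℚ) * (s-j : ℕ) * catalan j * catalan (s-j)
      = (centralBinom j : ℚ) * centralBinom (s-j)
        - (centralBinom j : ℚ) * catalan (s-j) - (catalan j : ℚ) * centralBinom (s-j)
        + (catalan j : ℚ) * catalan (s-j) := by
    intro j hj
    rw [L2 j, L2 (s-j)]
    ring
  rw [Finset.sum_congr rfl key]
  simp only [Finset.sum_add_distrib, Finset.sum_sub_distrib]
  have refl : ∑ j ∈ range (s+1), (catalan j : ℚ) * centralBinom (s-j)
      = ∑ j ∈ range (s+1), (centralBinom j : ℚ) * catalan (s-j) := by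
    rw [← Finset.sum_range_reflect]
    apply Finset.sum_congr rfl
    intro j hj
    simp only [mem_range] at hj
    have h1 : s + 1 - 1 - j = s - j := by omega
    have h2 : s - (s - j) = j := by omega
    rw [h1, h2, mul_comm]
  rw [refl, L5, L3, L1, L2]
  push_cast
  ring


open Finset

noncomputable section

abbrev R := PowerSeries ℚ
abbrev S := PowerSeries R

lemma fin2_decomp (w : Fin 2 →₀ ℕ) : w = Finsupp.single 0 (w 0) + Finsupp.single 1 (w 1) := by
  ext a
  fin_cases a <;> simp

lemma fin2_eq_iff (k n k' n' : ℕ) :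
    (Finsupp.single (0:Fin 2) k + Finsupp.single 1 n = Finsupp.single (0:Fin 2) k' + Finsupp.single 1 n')
      ↔ (k = k' ∧ n = n') := by
  constructor
  · intro h
    have h0 := DFunLike.congr_fun h (0 : Fin 2)
    have h1 := DFunLike.congr_fun h (1 : Fin 2)
    simp at h0 h1
    exact ⟨h0, h1⟩
  · rintro ⟨rfl, rfl⟩
    rfl

lemma fin2_eq_single0 (k n a : ℕ) :
    (Finsupp.single (0:Fin 2) k + Finsupp.single 1 n = Finsupp.single (0:Fin 2) a)
      ↔ (k = a ∧ n = 0) := by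
  have : (Finsupp.single (0:Fin 2) a : Fin 2 →₀ ℕ)
      = Finsupp.single (0:Fin 2) a + Finsupp.single 1 0 := by simp
  rw [this, fin2_eq_iff]

lemma fin2_eq_single1 (k n a : ℕ) :
    (Finsupp.single (0:Fin 2) k + Finsupp.single 1 n = Finsupp.single (1:Fin 2) a)
      ↔ (k = 0 ∧ n = a) := by
  have : (Finsupp.single (1:Fin 2) a : Fin 2 →₀ ℕ)
      = Finsupp.single (0:Fin 2) 0 + Finsupp.single 1 a := by simp
  rw [this, fin2_eq_iff]

lemma fin2_eq_zero (k n : ℕ) :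
    (Finsupp.single (0:Fin 2) k + Finsupp.single 1 n = 0) ↔ (k = 0 ∧ n = 0) := by
  have : (0 : Fin 2 →₀ ℕ) = Finsupp.single (0:Fin 2) 0 + Finsupp.single 1 0 := by simp
  rw [this, fin2_eq_iff]

/-- transfer map raw function -/
def PhiFun (f : MvPowerSeries (Fin 2) ℚ) : S :=
  PowerSeries.mk fun k => PowerSeries.mk fun n =>
    MvPowerSeries.coeff (Finsupp.single 0 k + Finsupp.single 1 n) f

lemma coeff_PhiFun (f : MvPowerSeries (Fin 2) ℚ) (k n : ℕ) :
    PowerSeries.coeff n (PowerSeries.coeff k (PhiFun f)) =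
      MvPowerSeries.coeff (Finsupp.single 0 k + Finsupp.single 1 n) f := by
  simp [PhiFun, PowerSeries.coeff_mk]

lemma PhiFun_mul (f g : MvPowerSeries (Fin 2) ℚ) :
    PhiFun (f * g) = PhiFun f * PhiFun g := by
  apply PowerSeries.ext; intro k
  apply PowerSeries.ext; intro n
  rw [coeff_PhiFun, PowerSeries.coeff_mul, map_sum]
  have hrhs : ∀ p ∈ antidiagonal k,
      PowerSeries.coeff n (PowerSeries.coeff p.1 (PhiFun f) * PowerSeries.coeff p.2 (PhiFun g))
      = ∑ q ∈ antidiagonal n,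
          MvPowerSeries.coeff (Finsupp.single 0 p.1 + Finsupp.single 1 q.1) f *
          MvPowerSeries.coeff (Finsupp.single 0 p.2 + Finsupp.single 1 q.2) g := by
    intro p _
    rw [PowerSeries.coeff_mul]
    exact Finset.sum_congr rfl fun q _ => by rw [coeff_PhiFun, coeff_PhiFun]
  rw [Finset.sum_congr rfl hrhs, MvPowerSeries.coeff_mul, ← Finset.sum_product']
  apply Finset.sum_nbij' (i := fun (w : (Fin 2 →₀ ℕ) × (Fin 2 →₀ ℕ)) =>
      (((w.1 0, w.2 0) : ℕ × ℕ), ((w.1 1, w.2 1) : ℕ × ℕ)))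
    (j := fun (q : (ℕ × ℕ) × (ℕ × ℕ)) =>
      (Finsupp.single 0 q.1.1 + Finsupp.single 1 q.2.1,
       Finsupp.single 0 q.1.2 + Finsupp.single 1 q.2.2))
  · intro w hw
    rw [Finset.HasAntidiagonal.mem_antidiagonal] at hw
    simp only [Finset.mem_product, Finset.mem_antidiagonal]
    constructor
    · have := DFunLike.congr_fun hw (0 : Fin 2)
      simpa using this
    · have := DFunLike.congr_fun hw (1 : Fin 2)
      simpa using this
  · intro q hq
    simp only [Finset.mem_product, Finset.HasAntidiagonal.mem_antidiagonal] at hq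
    rw [Finset.HasAntidiagonal.mem_antidiagonal]
    ext a
    fin_cases a <;> simp [hq.1, hq.2]
  · intro w hw
    simp only
    rw [← fin2_decomp, ← fin2_decomp]
  · intro q hq
    obtain ⟨⟨a,b⟩,⟨c,d⟩⟩ := q
    simp
  · intro w hw
    simp only
    rw [← fin2_decomp, ← fin2_decomp]

def Phi : MvPowerSeries (Fin 2) ℚ →+* S where
  toFun := PhiFun
  map_one' := by
    apply PowerSeries.ext; intro k
    apply PowerSeries.ext; intro n
    rw [coeff_PhiFun, MvPowerSeries.coeff_one]
    by_cases hk : k = 0 <;> by_cases hn : n = 0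
    · subst hk; subst hn
      rw [if_pos ((fin2_eq_zero _ _).2 ⟨rfl, rfl⟩)]
      simp
    · rw [if_neg (fun h => hn ((fin2_eq_zero _ _).1 h).2)]
      simp [PowerSeries.coeff_one, hk, hn]
    · rw [if_neg (fun h => hk ((fin2_eq_zero _ _).1 h).1)]
      simp [PowerSeries.coeff_one, hk, hn]
    · rw [if_neg (fun h => hk ((fin2_eq_zero _ _).1 h).1)]
      simp [PowerSeries.coeff_one, hk, hn]
  map_mul' := PhiFun_mul
  map_zero' := by
    apply PowerSeries.ext; intro k
    apply PowerSeries.ext; intro n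
    rw [coeff_PhiFun]
    simp
  map_add' f g := by
    apply PowerSeries.ext; intro k
    apply PowerSeries.ext; intro n
    simp [coeff_PhiFun, PhiFun, PowerSeries.coeff_mk]

lemma coeff_Phi (f : MvPowerSeries (Fin 2) ℚ) (k n : ℕ) :
    PowerSeries.coeff n (PowerSeries.coeff k (Phi f)) =
      MvPowerSeries.coeff (Finsupp.single 0 k + Finsupp.single 1 n) f :=
  coeff_PhiFun f k n

lemma Phi_X0 : Phi (MvPowerSeries.X 0) = (PowerSeries.X : S) := by
  apply PowerSeries.ext; intro k
  apply PowerSeries.ext; intro n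
  rw [coeff_Phi, MvPowerSeries.coeff_X, PowerSeries.coeff_X]
  by_cases hk : k = 1 <;> by_cases hn : n = 0
  · subst hk; subst hn
    rw [if_pos ((fin2_eq_single0 _ _ _).2 ⟨rfl, rfl⟩), if_pos rfl]
    simp
  · subst hk
    rw [if_neg (fun h => hn ((fin2_eq_single0 _ _ _).1 h).2), if_pos rfl,
      PowerSeries.coeff_one, if_neg hn]
  · rw [if_neg (fun h => hk ((fin2_eq_single0 _ _ _).1 h).1), if_neg hk, map_zero]
  · rw [if_neg (fun h => hk ((fin2_eq_single0 _ _ _).1 h).1), if_neg hk, map_zero]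

lemma Phi_X1 : Phi (MvPowerSeries.X 1) = (PowerSeries.C (PowerSeries.X : R) : S) := by
  apply PowerSeries.ext; intro k
  apply PowerSeries.ext; intro n
  rw [coeff_Phi, MvPowerSeries.coeff_X, PowerSeries.coeff_C]
  by_cases hk : k = 0 <;> by_cases hn : n = 1
  · subst hk; subst hn
    rw [if_pos ((fin2_eq_single1 _ _ _).2 ⟨rfl, rfl⟩), if_pos rfl, PowerSeries.coeff_X, if_pos rfl]
  · subst hk
    rw [if_neg (fun h => hn ((fin2_eq_single1 _ _ _).1 h).2), if_pos rfl,
      PowerSeries.coeff_X, if_neg hn]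
  · rw [if_neg (fun h => hk ((fin2_eq_single1 _ _ _).1 h).1), if_neg hk, map_zero]
  · rw [if_neg (fun h => hk ((fin2_eq_single1 _ _ _).1 h).1), if_neg hk, map_zero]

end

-- PART B : analysis in S = (ℚ[[t]])[[x]]
noncomputable section PartB

abbrev Xb : R := PowerSeries.X
abbrev XS : S := PowerSeries.X
abbrev T : S := PowerSeries.C Xb

/-- `(1 - t)⁻ᵈ` in R -/
def W (d : ℕ) : R := ((PowerSeries.invOneSubPow ℚ d : (PowerSeries ℚ)ˣ) : R)

lemma W_spec (d : ℕ) : W d * (1 - Xb) ^ d = 1 := by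
  have h := (PowerSeries.invOneSubPow ℚ d).val_inv
  rwa [PowerSeries.invOneSubPow_inv_eq_one_sub_pow] at h

lemma W_add (a b : ℕ) : W (a + b) = W a * W b := by
  unfold W
  rw [PowerSeries.invOneSubPow_eq_inv_one_sub_pow, PowerSeries.invOneSubPow_eq_inv_one_sub_pow,
    PowerSeries.invOneSubPow_eq_inv_one_sub_pow, pow_add, Units.val_mul]

lemma coeff_W (d n : ℕ) (hd : 0 < d) :
    PowerSeries.coeff n (W d) = Nat.choose (d - 1 + n) (d - 1) := by
  unfold W
  rw [PowerSeries.invOneSubPow_val_eq_mk_sub_one_add_choose_of_pos _ _ hd, PowerSeries.coeff_mk]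

lemma hW2 : W 2 * (1 - Xb)^2 = 1 := W_spec 2

/-- the x-coefficients of gD -/
def Fk : ℕ → R := fun k =>
  if k = 0 then 0
  else (catalan (k-1) : R) * (((2*k-2 : ℕ) : R) + Xb) * Xb^(2*k) * W (2*k)

def Fexp : S := PowerSeries.mk Fk

def A : S := (1 - T)^2 - 4 * XS * T^2
def B : S := A + 1 - T
def V : S := PowerSeries.mk fun k => (4:R)^k * Xb^(2*k) * W (2*k+2)

lemma A_eq : A = PowerSeries.C ((1 - Xb)^2) + PowerSeries.C (-(4*Xb^2)) * XS^1 := by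
  unfold A T
  have h1 : (1 - PowerSeries.C Xb)^2 = PowerSeries.C ((1-Xb)^2) := by
    rw [map_pow, map_sub, map_one]
  have h4 : PowerSeries.C (4:R) = (4:S) := map_ofNat _ 4
  rw [← h1, map_neg, map_mul, map_pow, h4]
  ring

lemma coeff_V (j : ℕ) : PowerSeries.coeff j V = (4:R)^j * Xb^(2*j) * W (2*j+2) := by
  rw [V, PowerSeries.coeff_mk]

lemma AV : A * V = 1 := by
  apply PowerSeries.ext; intro k
  rw [PowerSeries.coeff_one, A_eq, add_mul, map_add, PowerSeries.coeff_C_mul]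
  rcases Nat.eq_zero_or_pos k with h | h
  · subst h
    rw [if_pos rfl, coeff_V 0]
    have h0 : PowerSeries.coeff 0 (PowerSeries.C (-(4*Xb^2)) * XS^1 * V) = 0 := by
      rw [show PowerSeries.C (-(4*Xb^2)) * XS^1 * V = XS * (PowerSeries.C (-(4*Xb^2)) * V) by
        ring, PowerSeries.coeff_zero_eq_constantCoeff]
      simp
    rw [h0]
    norm_num
    linear_combination hW2
  · obtain ⟨j, rfl⟩ : ∃ j, k = j + 1 := ⟨k-1, by omega⟩
    rw [if_neg (by omega), coeff_V (j+1)]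
    rw [show PowerSeries.C (-(4*Xb^2)) * XS^1 * V = XS * (PowerSeries.C (-(4*Xb^2)) * V) by
      ring, PowerSeries.coeff_succ_X_mul, PowerSeries.coeff_C_mul, coeff_V j]
    rw [show 2*(j+1)+2 = (2*j+2)+2 by ring, W_add (2*j+2) 2]
    linear_combination ((4:R)^(j+1) * Xb^(2*(j+1)) * W (2*j+2)) * hW2

/-- `u' = 2 Fexp + 2 - T` as an explicit mk -/
def uP : S := PowerSeries.mk fun k => if k = 0 then 2 - Xb else 2 * Fk k

lemma uP_eq : uP = 2 * Fexp + 2 - T := by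
  apply PowerSeries.ext; intro k
  rw [uP, PowerSeries.coeff_mk, map_sub, map_add]
  have h2 : (2:S) = PowerSeries.C (2:R) := (map_ofNat _ 2).symm
  rw [show (2:S) * Fexp = PowerSeries.C (2:R) * Fexp by rw [← h2], PowerSeries.coeff_C_mul]
  rw [h2, PowerSeries.coeff_C, PowerSeries.coeff_C]
  rcases Nat.eq_zero_or_pos k with h | h
  · subst h
    rw [if_pos rfl, if_pos rfl, if_pos rfl, Fexp, PowerSeries.coeff_mk]
    show (2:R) - Xb = 2 * Fk 0 + 2 - Xb
    rw [show Fk 0 = 0 from if_pos rfl]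
    ring
  · rw [if_neg (by omega), if_neg (by omega), if_neg (by omega), Fexp, PowerSeries.coeff_mk]
    ring

end PartB

-- PART C : the key identity
noncomputable section PartC
open Finset

lemma h6R (m : ℕ) : (∑ i ∈ range (m+1),
      (i:R) * ((m-i:ℕ):R) * (catalan i : R) * (catalan (m-i) : R))
    = 4^m - ((m:R)+1) * (catalan (m+1) : R) := by
  have h := congrArg (PowerSeries.C (R := ℚ)) (L6 m)
  rw [map_sum] at h
  simpa only [map_mul, map_sub, map_add, map_pow, map_natCast, map_one, map_ofNat] using h

lemma h1R (m : ℕ) : (∑ i ∈ range (m+1), (catalan i : R) * (catalan (m-i) : R))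
    = (catalan (m+1) : R) := by
  have h := congrArg (PowerSeries.C (R := ℚ)) (L1 m)
  rw [map_sum] at h
  simpa only [map_mul, map_natCast] using h

lemma KeyR (m : ℕ) :
    (∑ i ∈ range (m+1), 4 * (catalan i : R) * (catalan (m-i) : R) *
        (((2*i:ℕ):R) + Xb) * (((2*(m-i):ℕ):R) + Xb))
      + (8 - 4*Xb) * (catalan (m+1) : R) * (((2*m+2:ℕ):R) + Xb) = 4^(m+2) := by
  have e : ∀ i ∈ range (m+1),
      4 * (catalan i : R) * (catalan (m-i) : R) * (((2*i:ℕ):R) + Xb) * (((2*(m-i):ℕ):R) + Xb)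
      = 16 * ((i:R) * ((m-i:ℕ):R) * (catalan i : R) * (catalan (m-i) : R))
        + (8*(m:R)) * ((catalan i : R) * (catalan (m-i) : R)) * Xb
        + 4 * ((catalan i : R) * (catalan (m-i) : R)) * Xb^2 := by
    intro i hi
    simp only [Finset.mem_range] at hi
    have hle : i ≤ m := by omega
    have hsub : ((m - i:ℕ):R) = (m:R) - (i:R) := by
      exact_mod_cast Nat.cast_sub hle
    push_cast
    rw [hsub]
    ring
  rw [Finset.sum_congr rfl e, Finset.sum_add_distrib, Finset.sum_add_distrib,
    ← Finset.sum_mul, ← Finset.sum_mul, ← Finset.mul_sum, ← Finset.mul_sum, ← Finset.mul_sum,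
    h6R, h1R]
  push_cast
  ring

lemma coeff_A (k : ℕ) : PowerSeries.coeff k A =
    if k = 0 then (1 - Xb)^2 else if k = 1 then -(4*Xb^2) else 0 := by
  rw [A_eq, map_add, PowerSeries.coeff_C, PowerSeries.coeff_C_mul_X_pow]
  rcases Nat.eq_zero_or_pos k with h | h
  · subst h; norm_num
  · rcases Nat.lt_or_ge k 2 with h2 | h2
    · have : k = 1 := by omega
      subst this; norm_num
    · simp only [if_neg (show ¬ k = 0 from by omega), if_neg (show ¬ k = 1 from by omega)]
      ring

lemma coeff_uP_zero : PowerSeries.coeff 0 uP = 2 - Xb := by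
  rw [uP, PowerSeries.coeff_mk, if_pos rfl]

lemma ccoeff_uP : PowerSeries.constantCoeff uP = 2 - Xb := by
  rw [← PowerSeries.coeff_zero_eq_constantCoeff]
  exact coeff_uP_zero

lemma coeff_uP_succ (i : ℕ) : PowerSeries.coeff (i+1) uP = 2 * Fk (i+1) := by
  rw [uP, PowerSeries.coeff_mk, if_neg (by omega)]

lemma Fk_succ (i : ℕ) :
    Fk (i+1) = (catalan i : R) * (((2*i:ℕ):R) + Xb) * Xb^(2*i+2) * W (2*i+2) := by
  rw [Fk]
  simp only [if_neg (show ¬(i+1 = 0) by omega)]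
  rw [show (i+1-1 : ℕ) = i by omega, show (2*(i+1)-2 : ℕ) = 2*i by omega,
    show 2*(i+1) = 2*i+2 by omega]

lemma hE : uP^2 = A + 2 - 2*T + (1-T)^2 * V := by
  have h1T : (1 - T)^2 = PowerSeries.C ((1-Xb)^2) := by
    rw [map_pow, map_sub, map_one]
  have h22T : (2:S) - 2*T = PowerSeries.C ((2:R) - 2*Xb) := by
    rw [map_sub, map_mul, map_ofNat]
  apply PowerSeries.ext; intro k
  rw [pow_two, PowerSeries.coeff_mul, Finset.Nat.sum_antidiagonal_eq_sum_range_succ_mk]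
  have hRHS : PowerSeries.coeff k (A + 2 - 2*T + (1-T)^2 * V)
      = (if k = 0 then (1 - Xb)^2 else if k = 1 then -(4*Xb^2) else 0)
        + (if k = 0 then (2:R) - 2*Xb else 0)
        + (1-Xb)^2 * ((4:R)^k * Xb^(2*k) * W (2*k+2)) := by
    rw [show A + 2 - 2*T + (1-T)^2 * V = A + ((2:S) - 2*T) + (1-T)^2 * V by ring,
      map_add, map_add, coeff_A, h22T, PowerSeries.coeff_C, h1T, PowerSeries.coeff_C_mul, coeff_V]
  rw [hRHS]
  match k with
  | 0 =>
    simp only [Finset.sum_range_one, Nat.sub_zero, coeff_uP_zero, if_pos rfl]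
    rw [show (2*0+2 : ℕ) = 2 by omega]
    norm_num
    linear_combination (-1 : R) * hW2
  | 1 =>
    rw [Finset.sum_range_succ, Finset.sum_range_one]
    rw [show (1-0 : ℕ) = 1 by omega, show (1-1 : ℕ) = 0 by omega,
      coeff_uP_zero, coeff_uP_succ 0, Fk_succ 0]
    simp only [catalan_zero, Nat.cast_one, Nat.mul_zero, Nat.cast_zero, if_neg one_ne_zero,
      if_pos rfl]
    rw [show (2*0+2 : ℕ) = 2 by omega, show (2*1+2 : ℕ) = 2+2 by omega, W_add 2 2]
    norm_num
    linear_combination (-(4*Xb^2*W 2) - 4*Xb^2) * hW2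
  | (m+2) =>
    rw [Finset.sum_range_succ' (fun i => PowerSeries.coeff i uP *
      PowerSeries.coeff (m+2-i) uP) (m+2)]
    rw [Finset.sum_range_succ (fun i => PowerSeries.coeff (i+1) uP *
      PowerSeries.coeff (m+2-(i+1)) uP) (m+1)]
    have hmid : ∀ i ∈ range (m+1),
        PowerSeries.coeff (i+1) uP * PowerSeries.coeff (m+2-(i+1)) uP
        = (4 * (catalan i : R) * (catalan (m-i) : R) *
            (((2*i:ℕ):R) + Xb) * (((2*(m-i):ℕ):R) + Xb)) * (Xb^(2*m+4) * W (2*m+4)) := by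
      intro i hi
      simp only [Finset.mem_range] at hi
      obtain ⟨j, rfl⟩ : ∃ j, m = i + j := ⟨m - i, by omega⟩
      have hj : i + j - i = j := by omega
      have h1 : i + j + 2 - (i+1) = j + 1 := by omega
      rw [h1, hj, coeff_uP_succ, coeff_uP_succ, Fk_succ i, Fk_succ j]
      have hw : W (2*i+2) * W (2*j+2) = W (2*(i+j)+4) := by
        rw [← W_add, show 2*i+2+(2*j+2) = 2*(i+j)+4 from by omega]
      linear_combination (4*(catalan i : R)*(catalan j : R)*(((2*i:ℕ):R)+Xb)*
        (((2*j:ℕ):R)+Xb)*Xb^(2*i+2+(2*j+2))) * hw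
    rw [Finset.sum_congr rfl hmid, ← Finset.sum_mul]
    have htop : PowerSeries.coeff (m+1+1) uP * PowerSeries.coeff (m+2-(m+1+1)) uP
        + PowerSeries.coeff 0 uP * PowerSeries.coeff (m+2-0) uP
        = ((8 - 4*Xb) * (catalan (m+1) : R) * (((2*m+2:ℕ):R) + Xb)) * (Xb^(2*m+4) * W (2*m+4)) := by
      rw [show m+2-(m+1+1) = 0 by omega, show m+2-0 = m+1+1 by omega,
        PowerSeries.coeff_zero_eq_constantCoeff]
      rw [ccoeff_uP, coeff_uP_succ (m+1), Fk_succ (m+1)]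
      rw [show 2*(m+1)+2 = 2*m+4 by omega, show (2*(m+1) : ℕ) = 2*m+2 by omega]
      ring
    rw [add_assoc, htop, ← add_mul, KeyR m]
    rw [if_neg (show ¬ m+2 = 0 from by omega), if_neg (show ¬ m+2 = 1 from by omega),
      if_neg (show ¬ m+2 = 0 from by omega)]
    rw [show 2*(m+2)+2 = (2*m+4)+2 by omega, show (2*(m+2)) = 2*m+4 by omega, W_add (2*m+4) 2]
    linear_combination (-(4:R)^(m+2) * Xb^(2*m+4) * W (2*m+4)) * hW2

end PartC

-- PART D : main theorem in S
noncomputable section PartD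

def eps : S →+* ℚ := (PowerSeries.constantCoeff (R := ℚ)).comp (PowerSeries.constantCoeff (R := R))

lemma eps_T : eps T = 0 := by simp [eps]
lemma eps_XS : eps XS = 0 := by simp [eps]
lemma eps_uP : eps uP = 2 := by
  unfold eps
  simp only [RingHom.comp_apply, ccoeff_uP]
  rw [map_sub]
  simp only [PowerSeries.constantCoeff_X, sub_zero]
  exact map_ofNat _ 2

lemma eps_A : eps A = 1 := by
  unfold A
  rw [map_sub, map_pow, map_sub, map_one, eps_T, map_mul, map_mul, eps_XS]
  norm_num

theorem mainS (G D : S) (hG : G^2 = A)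
    (hG00 : PowerSeries.constantCoeff (PowerSeries.constantCoeff G) = 1)
    (hD : 2 * G * D = (G - 1) * (G - 1 + T)) : D = Fexp := by
  have hepsG : eps G = 1 := hG00
  have hABB : A * uP^2 = (A + 1 - T)^2 := by
    linear_combination A * hE + (1-T)^2 * AV
  have hGuB : (G * uP - (A+1-T)) * (G * uP + (A+1-T)) = 0 := by
    linear_combination uP^2 * hG + hABB
  have hne : G * uP + (A+1-T) ≠ 0 := by
    intro h
    have h4 := congrArg eps h
    rw [map_zero, map_add, map_sub, map_add, map_mul, eps_T, eps_A, map_one, eps_uP, hepsG] at h4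
    norm_num at h4
  have hGu : G * uP = A + 1 - T := by
    rcases mul_eq_zero.1 hGuB with h | h
    · exact sub_eq_zero.1 h
    · exact absurd h hne
  have hGu2 : G * (2*D + 2 - T) = A + 1 - T := by
    have hA : A = (1 - T)^2 - 4 * XS * T^2 := rfl
    linear_combination hD + hG
  have hGne : G ≠ 0 := by
    intro h
    rw [h, map_zero] at hepsG
    norm_num at hepsG
  have h2 : 2*D + 2 - T = uP := mul_left_cancel₀ hGne (hGu2.trans hGu.symm)
  have h2' : (2:S) * D = 2 * Fexp := by
    have := h2.trans uP_eq
    linear_combination this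
  have h2ne : (2:S) ≠ 0 := by
    intro h
    have h5 := congrArg eps h
    rw [map_ofNat, map_zero] at h5
    norm_num at h5
  exact mul_left_cancel₀ h2ne h2'

end PartD

-- PART E : coefficients of Fk
noncomputable section PartE

lemma nat_claim (k m : ℕ) (hk : 1 ≤ k) (hm : 1 ≤ m) :
    (2*k-2) * Nat.choose (2*k-1+m) (2*k-1) + Nat.choose (2*k-2+m) (2*k-1)
      = (2*k-2+m) * Nat.choose (2*k-2+m) (2*k-2) := by
  have hpas : Nat.choose (2*k-1+m) (2*k-1) =
      Nat.choose (2*k-2+m) (2*k-2) + Nat.choose (2*k-2+m) (2*k-1) := by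
    rw [show 2*k-1+m = (2*k-2+m)+1 by omega, show 2*k-1 = (2*k-2)+1 by omega]
    exact Nat.choose_succ_succ _ _
  rw [hpas]
  have hright : Nat.choose (2*k-2+m) (2*k-1) * (2*k-1) =
      Nat.choose (2*k-2+m) (2*k-2) * m := by
    have h := Nat.choose_succ_right_eq (2*k-2+m) (2*k-2)
    rw [show (2*k-2)+1 = 2*k-1 by omega] at h
    rw [h, show 2*k-2+m - (2*k-2) = m by omega]
  obtain ⟨a, rfl⟩ : ∃ a, k = a + 1 := ⟨k-1, by omega⟩
  rw [show 2*(a+1)-2 = 2*a by omega] at *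
  rw [show 2*(a+1)-1 = 2*a+1 by omega] at *
  calc (2*a) * (Nat.choose (2*a+m) (2*a) + Nat.choose (2*a+m) (2*a+1)) + Nat.choose (2*a+m) (2*a+1)
      = (2*a) * Nat.choose (2*a+m) (2*a) + Nat.choose (2*a+m) (2*a+1) * (2*a+1) := by ring
    _ = (2*a) * Nat.choose (2*a+m) (2*a) + Nat.choose (2*a+m) (2*a) * m := by rw [hright]
    _ = (2*a+m) * Nat.choose (2*a+m) (2*a) := by ring

lemma cat_choose (k : ℕ) (hk : 1 ≤ k) :
    (catalan (k-1) : ℚ) * k = Nat.choose (2*k-2) (k-1) := by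
  have h2 : ((k-1)+1) * catalan (k-1) = Nat.choose (2*(k-1)) (k-1) :=
    succ_mul_catalan_eq_centralBinom (k-1)
  rw [show (k-1)+1 = k by omega, show 2*(k-1) = 2*k-2 by omega] at h2
  rw [mul_comm]
  exact_mod_cast congrArg (Nat.cast (R := ℚ)) h2

lemma coeff_Fk (k n : ℕ) : PowerSeries.coeff n (Fk k) =
    if 1 ≤ k ∧ 2 * k ≤ n then
      ((n : ℚ) - 2) / k * (Nat.choose (2 * k - 2) (k - 1)) * (Nat.choose (n - 2) (2 * k - 2))
    else 0 := by
  rcases Nat.eq_zero_or_pos k with hk | hk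
  · subst hk
    rw [show Fk 0 = 0 from if_pos rfl]
    simp
  have hkne : ¬ (k = 0) := by omega
  have hk0 : (k:ℚ) ≠ 0 := by exact_mod_cast hkne
  rw [Fk, if_neg hkne]
  have hc1 : (catalan (k-1) : R) = PowerSeries.C ((catalan (k-1) : ℚ)) := by rw [map_natCast]
  have hc2 : ((2*k-2 : ℕ) : R) = PowerSeries.C (((2*k-2 : ℕ) : ℚ)) := by rw [map_natCast]
  rw [hc1, hc2]
  rw [show PowerSeries.C ((catalan (k-1) : ℚ)) * (PowerSeries.C (((2*k-2:ℕ)):ℚ) + Xb) *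
      Xb^(2*k) * W (2*k)
    = PowerSeries.C ((catalan (k-1) : ℚ)) *
        (PowerSeries.C (((2*k-2:ℕ)):ℚ) * (Xb^(2*k) * W (2*k))
          + Xb^(2*k+1) * W (2*k)) from by ring]
  rw [PowerSeries.coeff_C_mul, map_add, PowerSeries.coeff_C_mul,
    PowerSeries.coeff_X_pow_mul', PowerSeries.coeff_X_pow_mul']
  by_cases hn : 2*k ≤ n
  · rw [if_pos hn, if_pos (show 1 ≤ k ∧ 2 * k ≤ n from ⟨hk, hn⟩),
      coeff_W _ _ (show 0 < 2*k by omega)]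
    have hkc : ((2*k-2:ℕ):ℚ) = 2*(k:ℚ) - 2 := by
      rw [Nat.cast_sub (by omega : 2 ≤ 2*k)]
      push_cast
      ring
    have hnc : ((n:ℚ)) - 2 = ((n-2:ℕ):ℚ) := by
      rw [Nat.cast_sub (by omega : 2 ≤ n)]
      push_cast
      ring
    by_cases hm : 2*k+1 ≤ n
    · rw [if_pos hm, coeff_W _ _ (show 0 < 2*k by omega)]
      have hclaim := nat_claim k (n - 2*k) hk (by omega)
      rw [show 2*k-2 + (n - 2*k) = n - 2 by omega] at hclaim
      rw [show 2*k-1 + (n - (2*k+1)) = n - 2 by omega]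
      have hclaimQ : ((2*k-2:ℕ):ℚ) * (Nat.choose (2*k-1 + (n-2*k)) (2*k-1) : ℚ)
          + (Nat.choose (n-2) (2*k-1) : ℚ)
          = ((n-2:ℕ):ℚ) * (Nat.choose (n-2) (2*k-2) : ℚ) := by
        exact_mod_cast congrArg (Nat.cast (R := ℚ)) hclaim
      rw [hnc]
      field_simp
      linear_combination ((catalan (k-1):ℚ) * k) * hclaimQ
        + (((n-2:ℕ):ℚ) * (Nat.choose (n-2) (2*k-2):ℚ)) * cat_choose k hk
    · rw [if_neg hm]
      have hn2k : n = 2*k := by omega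
      subst hn2k
      rw [show 2*k-1 + (2*k - 2*k) = 2*k-1 by omega, Nat.choose_self,
        show 2*k-2 = 2*k - 2 from rfl, show (2*k - 2 : ℕ).choose (2*k-2) = 1 from Nat.choose_self _]
      rw [hkc]
      have h2kc : ((2*k:ℕ):ℚ) = 2*(k:ℚ) := by push_cast; ring
      rw [h2kc]
      field_simp
      linear_combination (2*(k:ℚ) - 2) * cat_choose k hk
  · rw [if_neg hn, if_neg (show ¬ (2*k+1 ≤ n) from by omega),
      if_neg (show ¬ (1 ≤ k ∧ 2 * k ≤ n) from by tauto)]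
    ring

end PartE

/-- Let `g ∈ ℚ[[x,t]]` satisfy `g² = (1-t)² - 4xt²` with constant term `1`, and let
`g_D` be the power series with `2g·g_D = (g-1)(g-1+t)`. Then `g_D` is the series
`Σ_{m≥0} Σ_{k≥1} ((2k+m-2)/k)·C(2k-2,k-1)·C(2k+m-2,2k-2)·x^k t^{2k+m}`:
its coefficient of `x^k tⁿ` is `((n-2)/k)·C(2k-2,k-1)·C(n-2,2k-2)` when `k ≥ 1` and
`n ≥ 2k`, and `0` otherwise. -/
theorem coefficients_of_gD (g gD : MvPowerSeries (Fin 2) ℚ)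
    (x t : MvPowerSeries (Fin 2) ℚ) (hx : x = MvPowerSeries.X 0) (ht : t = MvPowerSeries.X 1)
    (hg : g ^ 2 = (1 - t) ^ 2 - 4 * x * t ^ 2)
    (hg0 : MvPowerSeries.constantCoeff g = 1)
    (hD : 2 * g * gD = (g - 1) * (g - 1 + t)) :
    ∀ k n : ℕ, MvPowerSeries.coeff (Finsupp.single 0 k + Finsupp.single 1 n) gD =
      if 1 ≤ k ∧ 2 * k ≤ n then
        ((n : ℚ) - 2) / k * (Nat.choose (2 * k - 2) (k - 1)) *
          (Nat.choose (n - 2) (2 * k - 2))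
      else 0 := by
  subst hx ht
  intro k n
  have hG : (Phi g)^2 = A := by
    rw [← map_pow, hg, show A = (1-T)^2 - 4*XS*T^2 from rfl]
    rw [map_sub, map_mul, map_mul, map_pow, map_pow, map_sub, map_one, Phi_X0, Phi_X1, map_ofNat]
  have hG00 : PowerSeries.constantCoeff (PowerSeries.constantCoeff (Phi g)) = 1 := by
    rw [← PowerSeries.coeff_zero_eq_constantCoeff, ← PowerSeries.coeff_zero_eq_constantCoeff,
      coeff_Phi]
    rw [show (Finsupp.single (0:Fin 2) 0 + Finsupp.single (1:Fin 2) 0) = 0 by simp]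
    rw [show (MvPowerSeries.coeff (0 : Fin 2 →₀ ℕ)) g
      = MvPowerSeries.constantCoeff g from
        MvPowerSeries.coeff_zero_eq_constantCoeff_apply g]
    exact hg0
  have hDt : 2 * Phi g * Phi gD = (Phi g - 1) * (Phi g - 1 + T) := by
    have h := congrArg Phi hD
    rw [map_mul, map_mul, map_ofNat, map_mul, map_sub, map_one, map_add, map_sub, map_one,
      Phi_X1] at h
    exact h
  have hDF : Phi gD = Fexp := mainS (Phi g) (Phi gD) hG hG00 hDt
  rw [← coeff_Phi, hDF, Fexp, PowerSeries.coeff_mk, coeff_Fk]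
end
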